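/- arXiv:1606.07524 — 4 statements merged into one kernel-verified Lean document; each statement's English description precedes it below -/
import Mathlib

section
/- Suppose that the set of BI histories of a preference–sight tree (T,s) equals its set of SCBI histories. Then every BI history of (T,s) is sight-reachable. -/
/-- A preference tree: a nonempty finite, prefix-closed set `H` of histories
(finite sequences of actions) containing the empty sequence, together with a
total preorder `pref` (the preference `⪰`) on `H`. -/
structure PrefTree (A : Type) where
  H : Set (List A)
  pref : List A → List A → Prop
  H_finite : H.Finite
  nil_mem : ([] : List A) ∈ H
  prefix_closed : ∀ ⦃h h' : List A⦄, h <+: h' → h' ∈ H → h ∈ H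
  pref_refl : ∀ h ∈ H, pref h h
  pref_trans : ∀ h₁ ∈ H, ∀ h₂ ∈ H, ∀ h₃ ∈ H, pref h₁ h₂ → pref h₂ h₃ → pref h₁ h₃
  pref_total : ∀ h₁ ∈ H, ∀ h₂ ∈ H, pref h₁ h₂ ∨ pref h₂ h₁

/-- A history is terminal if no one-step extension of it lies in `H`. -/
def PrefTree.Terminal {A : Type} (T : PrefTree A) (z : List A) : Prop :=
  z ∈ T.H ∧ ∀ a : A, z ++ [a] ∉ T.H

/-- A BI history: a terminal history weakly preferred to every terminal history. -/
def PrefTree.BIHistory {A : Type} (T : PrefTree A) (z : List A) : Prop :=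
  T.Terminal z ∧ ∀ z', T.Terminal z' → T.pref z z'

/-- A sight function for a preference tree `T`: assigns to each history `h ∈ H` a
finite nonempty subset of `H` of histories extending `h`, containing `h`, downward closed (DC) and non-forgetting (NF). -/
structure SightFun (A : Type) (T : PrefTree A) where
  s : List A → Set (List A)
  subset_H : ∀ h ∈ T.H, s h ⊆ T.H
  mem_extends : ∀ h ∈ T.H, ∀ h' ∈ s h, h <+: h'
  s_nonempty : ∀ h ∈ T.H, (s h).Nonempty
  s_finite : ∀ h ∈ T.H, (s h).Finite
  mem_self : ∀ h ∈ T.H, h ∈ s h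
  dc : ∀ h ∈ T.H, ∀ h' h'' : List A, h <+: h' → h' <+: h'' → h'' ∈ s h → h' ∈ s h
  nf : ∀ h ∈ T.H, ∀ h' h'' : List A, h <+: h' → h' <+: h'' → h'' ∈ s h → h'' ∈ s h'

/-- `Z_h`: the set of histories in `s h` having no proper extension in `s h`. -/
def SightFun.Zs {A : Type} {T : PrefTree A} (s : SightFun A T) (h : List A) : Set (List A) :=
  {z | z ∈ s.s h ∧ ∀ z' ∈ s.s h, z <+: z' → z' = z}

/-- A SCBI history of `(T,s)`: a terminal history `h*` such that for every
history `h` and action `a` with `h·a ⊴ h*`, there is a `⪰`-maximal element of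
`Z_h` extending `h·a`. -/
def SCBIHistory {A : Type} (T : PrefTree A) (s : SightFun A T) (hstar : List A) : Prop :=
  T.Terminal hstar ∧ ∀ (h : List A) (a : A), (h ++ [a]) <+: hstar →
    ∃ z ∈ s.Zs h, (h ++ [a]) <+: z ∧ ∀ z' ∈ s.Zs h, T.pref z z'

/-- A history `h*` is sight-reachable if every one-step move `h·a` along it is
visible at `h`, i.e. `h·a ∈ s(h)`. -/
def SightReachable {A : Type} {T : PrefTree A} (s : SightFun A T) (hstar : List A) : Prop :=
  ∀ (h : List A) (a : A), (h ++ [a]) <+: hstar → (h ++ [a]) ∈ s.s h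

theorem SCBIHistory.sightReachable {A : Type} {T : PrefTree A} {s : SightFun A T}
    {hstar : List A} (hscbi : SCBIHistory T s hstar) : SightReachable s hstar := by
  intro h a hmove
  obtain ⟨z, hz, hmove_z, -⟩ := hscbi.2 h a hmove
  have hh : h ∈ T.H := T.prefix_closed ((List.prefix_append h [a]).trans hmove) hscbi.1.1
  exact s.dc h hh (h ++ [a]) z (List.prefix_append h [a]) hmove_z hz.1

/-- If the set of BI histories of `(T,s)` equals its set of SCBI histories,
then every BI history of `(T,s)` is sight-reachable. -/
theorem stmt0 {A : Type} (T : PrefTree A) (s : SightFun A T)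
    (heq : ∀ z : List A, T.BIHistory z ↔ SCBIHistory T s z) :
    ∀ z : List A, T.BIHistory z → SightReachable s z :=
  fun z hBI => ((heq z).mp hBI).sightReachable
end

section
/- Preference–sight consistency does not follow from the equality of BI and SCBI histories: there exists a preference–sight tree (T,s) whose set of BI histories equals its set of SCBI histories but which is not preference–sight consistent. -/
/-- The subjective preference `h1 ⪰_h h2` at `h`: `z1 ⪰ z2`, where `z1` is a
`⪰`-maximal element of `{z ∈ Z_h : h1 ⊴ z}` and `z2` is a `⪰`-maximal element of
`{z ∈ Z_h : h2 ⊴ z}`. -/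
def SubjPref {A : Type} (T : PrefTree A) (s : SightFun A T) (h h₁ h₂ : List A) : Prop :=
  ∃ z₁ z₂ : List A,
    z₁ ∈ s.Zs h ∧ h₁ <+: z₁ ∧ (∀ w ∈ s.Zs h, h₁ <+: w → T.pref z₁ w) ∧
    z₂ ∈ s.Zs h ∧ h₂ <+: z₂ ∧ (∀ w ∈ s.Zs h, h₂ <+: w → T.pref z₂ w) ∧
    T.pref z₁ z₂

/-- `(T,s)` is preference–sight consistent if at every history `h`, for all
`h1, h2 ∈ s(h)`: `h1 ⪰ h2` iff `h1 ⪰_h h2`. -/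
def PSConsistent {A : Type} (T : PrefTree A) (s : SightFun A T) : Prop :=
  ∀ h ∈ T.H, ∀ h₁ ∈ s.s h, ∀ h₂ ∈ s.s h, (T.pref h₁ h₂ ↔ SubjPref T s h h₁ h₂)

/-! Under perfect sight every player sees the whole remaining tree, so SCBI collapses to backward
induction and `BI = SCBI` holds for any preference. Consistency, however, also constrains the
preference on non-terminal histories: it must rank each history like its best continuation.
The tree of all action sequences of length at most `n ≥ 1`, in which longer is better, violates
this at the root, which is strictly worse than a leaf although both have the same best
continuation. -/

namespace PrefTree

variable {A : Type} (T : PrefTree A)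

def fullSight : SightFun A T where
  s h := {h' ∈ T.H | h <+: h'}
  subset_H _ _ _ hh' := hh'.1
  mem_extends _ _ _ hh' := hh'.2
  s_nonempty h hh := ⟨h, hh, List.prefix_refl h⟩
  s_finite _ _ := T.H_finite.subset fun _ hx => hx.1
  mem_self h hh := ⟨hh, List.prefix_refl h⟩
  dc _ _ _ _ hhh' hh'h'' hh'' := ⟨T.prefix_closed hh'h'' hh''.1, hhh'⟩
  nf _ _ _ _ _ hh'h'' hh'' := ⟨hh''.1, hh'h''⟩

variable {T}

theorem Terminal.eq_of_prefix {z w : List A} (hz : T.Terminal z) (hzw : z <+: w)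
    (hw : w ∈ T.H) : w = z := by
  obtain ⟨t, rfl⟩ := hzw
  cases t with
  | nil => exact List.append_nil z
  | cons a t => exact absurd (T.prefix_closed ⟨t, by simp⟩ hw) (hz.2 a)

theorem mem_Zs_fullSight_iff {h z : List A} :
    z ∈ T.fullSight.Zs h ↔ T.Terminal z ∧ h <+: z := by
  constructor
  · rintro ⟨⟨hzH, hhz⟩, hmax⟩
    refine ⟨⟨hzH, fun a ha => ?_⟩, hhz⟩
    have := hmax (z ++ [a]) ⟨ha, hhz.trans (List.prefix_append z [a])⟩
      (List.prefix_append z [a])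
    simpa using congrArg List.length this
  · rintro ⟨hz, hhz⟩
    exact ⟨⟨hz.1, hhz⟩, fun w hw hzw => hz.eq_of_prefix hzw hw.1⟩

theorem BIHistory.scbiHistory_fullSight {z : List A} (hz : T.BIHistory z) :
    SCBIHistory T T.fullSight z :=
  ⟨hz.1, fun h a hz' => ⟨z, mem_Zs_fullSight_iff.2 ⟨hz.1, (List.prefix_append h [a]).trans hz'⟩,
    hz', fun w hw => hz.2 w (mem_Zs_fullSight_iff.1 hw).1⟩⟩

/-- Induction on the unplayed suffix `t`: the best continuation promised at `p` extends
`p ++ [a]`, hence is no better than `z`, and it beats every terminal history extending `p`. -/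
theorem _root_.SCBIHistory.pref_of_prefix_fullSight {z : List A}
    (hz : SCBIHistory T T.fullSight z) :
    ∀ t p, p ++ t = z → ∀ w, T.Terminal w → p <+: w → T.pref z w := by
  intro t
  induction t with
  | nil =>
    rintro p rfl w hw hpw
    rw [List.append_nil] at hz ⊢
    rw [hz.1.eq_of_prefix hpw hw.1]
    exact T.pref_refl p hz.1.1
  | cons a t ih =>
    intro p hpz w hw hpw
    obtain ⟨y, hy, hpay, hymax⟩ := hz.2 p a ⟨t, by simpa using hpz⟩
    have hyt := mem_Zs_fullSight_iff.1 hy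
    have hwZ := mem_Zs_fullSight_iff.2 ⟨hw, hpw⟩
    exact T.pref_trans z hz.1.1 y hyt.1.1 w hw.1
      (ih (p ++ [a]) (by simpa using hpz) y hyt.1 hpay) (hymax w hwZ)

theorem scbiHistory_fullSight_iff {z : List A} :
    SCBIHistory T T.fullSight z ↔ T.BIHistory z :=
  ⟨fun hz => ⟨hz.1, fun w hw => hz.pref_of_prefix_fullSight z [] rfl w hw List.nil_prefix⟩,
    BIHistory.scbiHistory_fullSight⟩

variable (A) [Finite A]

def lengthTree (n : ℕ) : PrefTree A where
  H := {l | l.length ≤ n}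
  pref l₁ l₂ := l₂.length ≤ l₁.length
  H_finite := List.finite_length_le A n
  nil_mem := Nat.zero_le n
  prefix_closed _ _ hp hh' := hp.length_le.trans hh'
  pref_refl _ _ := le_rfl
  pref_trans _ _ _ _ _ _ h₁₂ h₂₃ := h₂₃.trans h₁₂
  pref_total l₁ _ l₂ _ := le_total l₂.length l₁.length

variable {A}

theorem terminal_lengthTree_of_length_eq {n : ℕ} {z : List A} (hz : z.length = n) :
    (lengthTree A n).Terminal z :=
  ⟨hz.le, fun a ha => by simp [lengthTree] at ha; omega⟩

theorem not_psConsistent_lengthTree [Nonempty A] {n : ℕ} (hn : 0 < n) :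
    ¬ PSConsistent (lengthTree A n) (lengthTree A n).fullSight := by
  intro hcons
  obtain ⟨a⟩ := ‹Nonempty A›
  set T := lengthTree A n
  set leaf := List.replicate n a
  have hleaf : T.Terminal leaf := terminal_lengthTree_of_length_eq List.length_replicate
  have hZ : leaf ∈ T.fullSight.Zs [] := mem_Zs_fullSight_iff.2 ⟨hleaf, List.nil_prefix⟩
  have hbest : ∀ w ∈ T.fullSight.Zs [], T.pref leaf w := fun w hw => by
    simpa [T, lengthTree, leaf] using hw.1.1
  have hsubj : SubjPref T T.fullSight [] [] leaf :=
    ⟨leaf, leaf, hZ, List.nil_prefix, fun w hw _ => hbest w hw, hZ, List.prefix_refl leaf,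
      fun w hw _ => hbest w hw, T.pref_refl leaf hleaf.1⟩
  have hroot := (hcons [] T.nil_mem [] (T.fullSight.mem_self [] T.nil_mem) leaf
    ⟨hleaf.1, List.nil_prefix⟩).2 hsubj
  simp [T, lengthTree, leaf] at hroot
  omega

end PrefTree

/-- Preference–sight consistency does not follow from BI = SCBI: there is a
P-S tree whose set of BI histories equals its set of SCBI histories but which
is not preference–sight consistent. -/
theorem stmt6 :
    ∃ (A : Type) (T : PrefTree A) (s : SightFun A T),
      {z : List A | T.BIHistory z} = {z : List A | SCBIHistory T s z} ∧
      ¬ PSConsistent T s :=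
  ⟨Unit, PrefTree.lengthTree Unit 1, (PrefTree.lengthTree Unit 1).fullSight,
    Set.ext fun _ => PrefTree.scbiHistory_fullSight_iff.symm,
    PrefTree.not_psConsistent_lengthTree Nat.one_pos⟩
end

section
/- For classical backward induction, the first move along a BI history can be strictly dispreferred to another available first move (with respect to the objective preference on intermediate histories): there exist a preference tree T = (H, ⪰), a BI history z*, and actions a, a' at the root such that the one-element history ⟨a⟩ is a prefix of z*, ⟨a'⟩ ∈ H, and ⟨a'⟩ ≻ ⟨a⟩. -/
/-! Backward induction compares only terminal histories, so it places no constraint on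
how intermediate histories are ranked. In the tree with plays `[false, false]` and `[true]`,
rank `[false, false]` highest, then `[true]`, then everything else: `[false, false]` is the
BI history, yet its first move `[false]` is strictly below the alternative `[true]`. -/

namespace PrefTree

variable {A : Type} {U : Type*} [LinearOrder U]

def ofPlays (plays : List (List A)) (hplays : plays ≠ []) (u : List A → U) : PrefTree A where
  H := {h | ∃ p ∈ plays, h <+: p}
  pref h₁ h₂ := u h₂ ≤ u h₁
  H_finite := (plays.finite_toSet.biUnion fun p _ => p.inits.finite_toSet).subset
    fun _ ⟨_, hp, hhp⟩ => Set.mem_biUnion hp ((List.mem_inits _ _).2 hhp)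
  nil_mem := ⟨plays.head hplays, plays.head_mem hplays, List.nil_prefix⟩
  prefix_closed := fun _ _ hhh' ⟨p, hp, hh'p⟩ => ⟨p, hp, hhh'.trans hh'p⟩
  pref_refl := fun _ _ => le_rfl
  pref_trans := fun _ _ _ _ _ _ h₁₂ h₂₃ => h₂₃.trans h₁₂
  pref_total := fun _ _ _ _ => le_total _ _

variable {plays : List (List A)} {hplays : plays ≠ []} {u : List A → U}

theorem mem_ofPlays_H {h : List A} : h ∈ (ofPlays plays hplays u).H ↔ ∃ p ∈ plays, h <+: p :=
  Iff.rfl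

theorem ofPlays_pref {h₁ h₂ : List A} : (ofPlays plays hplays u).pref h₁ h₂ ↔ u h₂ ≤ u h₁ :=
  Iff.rfl

theorem terminal_ofPlays_of_longest {z : List A} (hz : z ∈ plays)
    (hlongest : ∀ p ∈ plays, p.length ≤ z.length) : (ofPlays plays hplays u).Terminal z := by
  refine ⟨⟨z, hz, List.prefix_rfl⟩, fun a ⟨p, hp, hzap⟩ => ?_⟩
  have := hzap.length_le
  have := hlongest p hp
  simp only [List.length_append, List.length_singleton] at *
  omega

theorem biHistory_ofPlays {z : List A} (hz : (ofPlays plays hplays u).Terminal z)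
    (hmax : ∀ h, u h ≤ u z) : (ofPlays plays hplays u).BIHistory z :=
  ⟨hz, fun z' _ => hmax z'⟩

end PrefTree

def firstMoveUtility : List Bool → ℕ
  | [false, false] => 2
  | [true] => 1
  | _ => 0

theorem firstMoveUtility_le (h : List Bool) :
    firstMoveUtility h ≤ firstMoveUtility [false, false] := by
  unfold firstMoveUtility
  split <;> omega

/-- For classical backward induction, the first move along a BI history can be
strictly dispreferred to another available first move: there are a preference
tree `T`, a BI history `z*` and actions `a, a'` at the root with `⟨a⟩ ⊴ z*`,
`⟨a'⟩ ∈ H` and `⟨a'⟩ ≻ ⟨a⟩`. -/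
theorem stmt13 :
    ∃ (A : Type) (T : PrefTree A) (zstar : List A) (a a' : A),
      T.BIHistory zstar ∧ [a] <+: zstar ∧ [a'] ∈ T.H ∧
      T.pref [a'] [a] ∧ ¬ T.pref [a] [a'] := by
  let T := PrefTree.ofPlays [[false, false], [true]] (List.cons_ne_nil _ _) firstMoveUtility
  have hzstar : T.BIHistory [false, false] :=
    PrefTree.biHistory_ofPlays
      (PrefTree.terminal_ofPlays_of_longest (by simp) (by simp)) firstMoveUtility_le
  refine ⟨Bool, T, [false, false], false, true, hzstar, ⟨[false], rfl⟩,
    PrefTree.mem_ofPlays_H.2 ⟨[true], by simp, List.prefix_rfl⟩, ?_, ?_⟩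
  all_goals simp [T, PrefTree.ofPlays_pref, firstMoveUtility]
end

section
/- The SCBI path is not globally optimal: there exist a preference–sight tree (T,s), a SCBI history z of (T,s), and a terminal history z' ∈ Z such that z' ≻ z. -/
/-! With sight limited to one move, the player at the root compares only the histories one
step ahead. In the tree where `false` ends the game at once and `true` is followed by one
more move, rank the long history `[true, true]` first, `[false]` second and everything else
last. Seen from the root, `[false]` beats `[true]`, so `[false]` is a SCBI history, although
`[true, true]` is strictly preferred to it. -/

namespace PrefTree

variable {A : Type}

def ofRank {β : Type} [LinearOrder β] (H : Finset (List A)) (nil_mem : [] ∈ H)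
    (prefix_closed : ∀ ⦃h h' : List A⦄, h <+: h' → h' ∈ H → h ∈ H) (rk : List A → β) :
    PrefTree A where
  H := ↑H
  pref h₁ h₂ := rk h₂ ≤ rk h₁
  H_finite := H.finite_toSet
  nil_mem := nil_mem
  prefix_closed := prefix_closed
  pref_refl _ _ := le_rfl
  pref_trans _ _ _ _ _ _ h₁₂ h₂₃ := h₂₃.trans h₁₂
  pref_total _ _ _ _ := le_total _ _

lemma Terminal.eq_of_prefix_s15 {T : PrefTree A} {z z' : List A} (hz : T.Terminal z)
    (hz' : z' ∈ T.H) (hzz' : z <+: z') : z' = z := by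
  obtain ⟨t, rfl⟩ := hzz'
  cases t with
  | nil => exact List.append_nil z
  | cons a t =>
    exact absurd (T.prefix_closed ⟨t, by simp⟩ hz') (hz.2 a)

end PrefTree

namespace SightFun

def ofHorizon {A : Type} (T : PrefTree A) (k : ℕ) : SightFun A T where
  s h := {h' | h' ∈ T.H ∧ h <+: h' ∧ h'.length ≤ h.length + k}
  subset_H _ _ _ hh' := hh'.1
  mem_extends _ _ _ hh' := hh'.2.1
  s_nonempty h hh := ⟨h, hh, List.prefix_refl h, Nat.le_add_right _ _⟩
  s_finite _ _ := T.H_finite.subset fun _ hh' => hh'.1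
  mem_self h hh := ⟨hh, List.prefix_refl h, Nat.le_add_right _ _⟩
  dc _ _ _ _ h₁ h₂ hh'' :=
    ⟨T.prefix_closed h₂ hh''.1, h₁, h₂.length_le.trans hh''.2.2⟩
  nf _ _ _ _ h₁ h₂ hh'' :=
    ⟨hh''.1, h₂, hh''.2.2.trans (Nat.add_le_add_right h₁.length_le _)⟩

lemma mem_Zs_of_terminal {A : Type} {T : PrefTree A} (s : SightFun A T) {h z : List A}
    (hh : h ∈ T.H) (hz : z ∈ s.s h) (hzT : T.Terminal z) : z ∈ s.Zs h :=
  ⟨hz, fun _ hz' hzz' => hzT.eq_of_prefix_s15 (s.subset_H h hh hz') hzz'⟩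

end SightFun

lemma SCBIHistory.singleton {A : Type} {T : PrefTree A} {s : SightFun A T} {a : A}
    (hT : T.Terminal [a]) (hs : [a] ∈ s.s []) (hmax : ∀ z ∈ s.s [], T.pref [a] z) :
    SCBIHistory T s [a] := by
  refine ⟨hT, fun h b hhb => ?_⟩
  obtain rfl : h = [] := by
    simpa using congrArg List.length (hhb.eq_of_length (hhb.length_le.antisymm (by simp)))
  exact ⟨[a], s.mem_Zs_of_terminal T.nil_mem hs hT, hhb, fun z hz => hmax z hz.1⟩

namespace Detour

def histories : Finset (List Bool) := {[], [false], [true], [true, true]}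

def rank : List Bool → ℕ
  | [true, true] => 2
  | [false] => 1
  | _ => 0

lemma histories_prefix_closed ⦃h h' : List Bool⦄ (hh' : h <+: h') (h'H : h' ∈ histories) :
    h ∈ histories :=
  (by decide : ∀ h' ∈ histories, ∀ h ∈ h'.inits, h ∈ histories) h' h'H h
    (List.mem_inits h h' |>.mpr hh')

def tree : PrefTree Bool := .ofRank histories (by decide) histories_prefix_closed rank

lemma terminal_stop : tree.Terminal [false] :=
  (by decide : [false] ∈ histories ∧ ∀ a, [false] ++ [a] ∉ histories)

lemma terminal_long : tree.Terminal [true, true] :=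
  (by decide : [true, true] ∈ histories ∧ ∀ a, [true, true] ++ [a] ∉ histories)

lemma scbiHistory_stop : SCBIHistory tree (.ofHorizon tree 1) [false] :=
  .singleton terminal_stop ⟨terminal_stop.1, List.nil_prefix, le_rfl⟩ fun z ⟨hz, _, hlen⟩ =>
    (by decide : ∀ z ∈ histories, z.length ≤ 1 → rank z ≤ rank [false]) z hz hlen

lemma long_strictly_preferred :
    tree.pref [true, true] [false] ∧ ¬ tree.pref [false] [true, true] :=
  (by decide : rank [false] ≤ rank [true, true] ∧ ¬ rank [true, true] ≤ rank [false])

end Detour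

/-- The SCBI path is not globally optimal: there are a P-S tree `(T,s)`, a SCBI
history `z` of `(T,s)` and a terminal history `z' ∈ Z` with `z' ≻ z`. -/
theorem stmt15 :
    ∃ (A : Type) (T : PrefTree A) (s : SightFun A T) (z z' : List A),
      SCBIHistory T s z ∧ T.Terminal z' ∧
      T.pref z' z ∧ ¬ T.pref z z' :=
  ⟨Bool, Detour.tree, .ofHorizon Detour.tree 1, [false], [true, true], Detour.scbiHistory_stop,
    Detour.terminal_long, Detour.long_strictly_preferred⟩
end
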